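/- The function c(s,t) = (1/6)·min(s,t)^2·(1−max(s,t))^2·(3·max(s,t) − min(s,t) − 2st) on [0,1]^2 satisfies: for every continuous u on [0,1], the function v(t) = ∫_0^1 c(s,t) u(s) ds is four times continuously differentiable with v'''' = u, v(0) = v'(0) = v(1) = v'(1) = 0. -/

import Mathlib

/-!
For `s ≤ t` the kernel is `c(s,t) = (t - s)³/6 + (t² α(s) - t³ β(s))` with
`α(s) = s(1-s)²/2` and `β(s) = (1-s)²(1+2s)/6`, while for `s ≥ t` only the cubic part
`t² α(s) - t³ β(s)` remains. Hence `v(t) = t² A - t³ B + (1/6) ∫₀ᵗ (t - s)³ u(s) ds` with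
`A = ∫₀¹ α u` and `B = ∫₀¹ β u`. By Cauchy's formula for repeated integration the last term is
the fourth primitive of `u` vanishing to third order at `0`; so `v'''' = u` and
`v(0) = v'(0) = 0`. The coefficients `α, β` are exactly those making `t ↦ c(s,t)` and its
derivative vanish at `t = 1`, which gives `v(1) = v'(1) = 0`.
-/

open Set MeasureTheory intervalIntegral

section IteratedDeriv

variable {𝕜 F : Type*} [NontriviallyNormedField 𝕜] [NormedAddCommGroup F] [NormedSpace 𝕜 F]
  {f f' : 𝕜 → F} {s : Set 𝕜} {n : ℕ}

theorem contDiffOn_succ_of_hasDerivWithinAt (hs : UniqueDiffOn 𝕜 s)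
    (hf : ∀ x ∈ s, HasDerivWithinAt f (f' x) s x) (hf' : ContDiffOn 𝕜 n f' s) :
    ContDiffOn 𝕜 (n + 1) f s := by
  rw [contDiffOn_succ_iff_derivWithin hs]
  refine ⟨fun x hx => (hf x hx).differentiableWithinAt, by simp, hf'.congr fun x hx => ?_⟩
  exact (hf x hx).derivWithin (hs x hx)

theorem iteratedDerivWithin_succ_eqOn_of_hasDerivWithinAt (hs : UniqueDiffOn 𝕜 s)
    (hf : ∀ x ∈ s, HasDerivWithinAt f (f' x) s x) :
    EqOn (iteratedDerivWithin (n + 1) f s) (iteratedDerivWithin n f' s) s := by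
  rw [iteratedDerivWithin_succ']
  exact iteratedDerivWithin_congr fun x hx => (hf x hx).derivWithin (hs x hx)

end IteratedDeriv

theorem ContinuousOn.hasDerivWithinAt_integral_Icc {E : Type*} [NormedAddCommGroup E]
    [NormedSpace ℝ E] [CompleteSpace E] {a b t : ℝ} {g : ℝ → E} (hg : ContinuousOn g (Icc a b))
    (ht : t ∈ Icc a b) :
    HasDerivWithinAt (fun x => ∫ s in a..x, g s) (g t) (Icc a b) t := by
  have : Fact (t ∈ Icc a b) := ⟨ht⟩
  exact integral_hasDerivWithinAt_right
    ((hg.mono (uIcc_subset_Icc (left_mem_Icc.2 (ht.1.trans ht.2)) ht)).intervalIntegrable)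
    (hg.stronglyMeasurableAtFilter_nhdsWithin measurableSet_Icc t) (hg t ht)

theorem ContinuousOn.intervalIntegrable_mul_of_mem_Icc {u f : ℝ → ℝ} {a b x y : ℝ}
    (hu : ContinuousOn u (Icc a b)) (hf : Continuous f) (hx : x ∈ Icc a b) (hy : y ∈ Icc a b) :
    IntervalIntegrable (fun s => f s * u s) volume x y :=
  ((hf.continuousOn.mul hu).mono (uIcc_subset_Icc hx hy)).intervalIntegrable

/-- By Cauchy's formula for repeated integration, `n!⁻¹ • cauchyRepeatedIntegral g a n` is the
`(n + 1)`-fold primitive of `g` vanishing at `a`; the factor `n!` is not included here. -/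
noncomputable def cauchyRepeatedIntegral (g : ℝ → ℝ) (a : ℝ) (n : ℕ) (t : ℝ) : ℝ :=
  ∫ s in a..t, (t - s) ^ n * g s

namespace cauchyRepeatedIntegral

variable {g : ℝ → ℝ} {a b t : ℝ}

theorem succ_eq (hg : ContinuousOn g (Icc a b)) (ht : t ∈ Icc a b) (n : ℕ) :
    cauchyRepeatedIntegral g a (n + 1) t =
      t * cauchyRepeatedIntegral g a n t - cauchyRepeatedIntegral (fun s => s * g s) a n t := by
  have ha : a ∈ Icc a b := left_mem_Icc.2 (ht.1.trans ht.2)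
  have hkernel : Continuous fun s : ℝ => (t - s) ^ n := by fun_prop
  unfold cauchyRepeatedIntegral
  rw [← intervalIntegral.integral_const_mul, ← integral_sub
    ((hg.intervalIntegrable_mul_of_mem_Icc hkernel ha ht).const_mul t)
    ((continuousOn_id.mul hg).intervalIntegrable_mul_of_mem_Icc (u := fun s => s * g s)
      hkernel ha ht)]
  congr 1 with s
  ring

theorem hasDerivWithinAt_zero (hg : ContinuousOn g (Icc a b)) (ht : t ∈ Icc a b) :
    HasDerivWithinAt (cauchyRepeatedIntegral g a 0) (g t) (Icc a b) t := by
  unfold cauchyRepeatedIntegral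
  simpa using hg.hasDerivWithinAt_integral_Icc ht

/-- Induction on `n` through `succ_eq`, which reduces the claim for `g` to the previous one (the
fundamental theorem of calculus when `n = 0`) for both `g` and `s ↦ s * g s`. -/
theorem hasDerivWithinAt_succ (n : ℕ) (hg : ContinuousOn g (Icc a b)) (ht : t ∈ Icc a b) :
    HasDerivWithinAt (cauchyRepeatedIntegral g a (n + 1))
      ((n + 1) * cauchyRepeatedIntegral g a n t) (Icc a b) t := by
  induction n generalizing g with
  | zero =>
    have h := ((hasDerivAt_id' (x := t)).hasDerivWithinAt.mul (hasDerivWithinAt_zero hg ht)).sub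
      (hasDerivWithinAt_zero (continuousOn_id.mul hg) ht)
    refine (h.congr (fun x hx => succ_eq hg hx 0) (succ_eq hg ht 0)).congr_deriv ?_
    simp
  | succ n ih =>
    have hsg : ContinuousOn (fun s => s * g s) (Icc a b) := continuousOn_id.mul hg
    have h := ((hasDerivAt_id' (x := t)).hasDerivWithinAt.mul (ih hg)).sub (ih hsg)
    refine (h.congr (fun x hx => succ_eq hg hx _) (succ_eq hg ht _)).congr_deriv ?_
    rw [succ_eq hg ht]
    push_cast
    ring

theorem contDiffOn (hab : a < b) (hg : ContinuousOn g (Icc a b)) (n : ℕ) :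
    ContDiffOn ℝ (n + 1) (cauchyRepeatedIntegral g a n) (Icc a b) := by
  induction n with
  | zero =>
    exact contDiffOn_succ_of_hasDerivWithinAt (uniqueDiffOn_Icc hab)
      (fun t ht => hasDerivWithinAt_zero hg ht) (by simpa using hg)
  | succ n ih =>
    refine contDiffOn_succ_of_hasDerivWithinAt (uniqueDiffOn_Icc hab)
      (fun t ht => hasDerivWithinAt_succ n hg ht) ?_
    exact_mod_cast contDiffOn_const.mul ih

theorem iteratedDerivWithin_eqOn (hab : a < b) (hg : ContinuousOn g (Icc a b)) (n : ℕ) :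
    EqOn (iteratedDerivWithin (n + 1) (cauchyRepeatedIntegral g a n) (Icc a b))
      (fun t => n.factorial * g t) (Icc a b) := by
  induction n with
  | zero =>
    intro t ht
    rw [iteratedDerivWithin_succ_eqOn_of_hasDerivWithinAt (uniqueDiffOn_Icc hab)
      (fun t ht => hasDerivWithinAt_zero hg ht) ht]
    simp
  | succ n ih =>
    intro t ht
    rw [iteratedDerivWithin_succ_eqOn_of_hasDerivWithinAt (uniqueDiffOn_Icc hab)
      (fun t ht => hasDerivWithinAt_succ n hg ht) ht, iteratedDerivWithin_const_mul_field, ih ht,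
      Nat.factorial_succ]
    push_cast
    ring

end cauchyRepeatedIntegral

noncomputable def bridgeKernel (s t : ℝ) : ℝ :=
  1/6 * (min s t)^2 * (1 - max s t)^2 * (3 * max s t - min s t - 2*s*t)

theorem bridgeKernel_of_le {s t : ℝ} (h : s ≤ t) :
    bridgeKernel s t = (t - s) ^ 3 / 6
      + (t ^ 2 * (s * (1 - s) ^ 2 / 2) - t ^ 3 * ((1 - s) ^ 2 * (1 + 2 * s) / 6)) := by
  rw [bridgeKernel, min_eq_left h, max_eq_right h]
  ring

theorem bridgeKernel_of_ge {s t : ℝ} (h : t ≤ s) :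
    bridgeKernel s t =
      t ^ 2 * (s * (1 - s) ^ 2 / 2) - t ^ 3 * ((1 - s) ^ 2 * (1 + 2 * s) / 6) := by
  rw [bridgeKernel, min_eq_right h, max_eq_left h]
  ring

theorem bridgeKernel_right_one {s : ℝ} (h : s ≤ 1) : bridgeKernel s 1 = 0 := by
  rw [bridgeKernel_of_le h]
  ring

theorem continuous_bridgeKernel_left (t : ℝ) : Continuous fun s => bridgeKernel s t := by
  unfold bridgeKernel
  fun_prop

noncomputable def bridgeCoeffSq (u : ℝ → ℝ) : ℝ := ∫ s in (0 : ℝ)..1, s * (1 - s) ^ 2 / 2 * u s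

noncomputable def bridgeCoeffCube (u : ℝ → ℝ) : ℝ :=
  ∫ s in (0 : ℝ)..1, (1 - s) ^ 2 * (1 + 2 * s) / 6 * u s

noncomputable def bridgeSolution (u : ℝ → ℝ) (t : ℝ) : ℝ :=
  (t ^ 2 * bridgeCoeffSq u - t ^ 3 * bridgeCoeffCube u) + cauchyRepeatedIntegral u 0 3 t / 6

section bridgeSolution

variable {u : ℝ → ℝ} {t : ℝ}

theorem integral_bridgeKernel_mul (hu : ContinuousOn u (Icc 0 1)) (ht : t ∈ Icc (0 : ℝ) 1) :
    ∫ s in (0 : ℝ)..1, bridgeKernel s t * u s = bridgeSolution u t := by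
  have h0 : (0 : ℝ) ∈ Icc (0 : ℝ) 1 := left_mem_Icc.2 zero_le_one
  have h1 : (1 : ℝ) ∈ Icc (0 : ℝ) 1 := right_mem_Icc.2 zero_le_one
  set p : ℝ → ℝ :=
    fun s => t ^ 2 * (s * (1 - s) ^ 2 / 2) - t ^ 3 * ((1 - s) ^ 2 * (1 + 2 * s) / 6)
  have hp : Continuous p := by fun_prop
  have hK := continuous_bridgeKernel_left t
  have hleft : ∫ s in (0 : ℝ)..t, bridgeKernel s t * u s =
      (∫ s in (0 : ℝ)..t, p s * u s) + cauchyRepeatedIntegral u 0 3 t / 6 := by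
    rw [cauchyRepeatedIntegral, ← intervalIntegral.integral_div, ← integral_add
      (hu.intervalIntegrable_mul_of_mem_Icc hp h0 ht)
      ((hu.intervalIntegrable_mul_of_mem_Icc (f := fun s => (t - s) ^ 3) (by fun_prop)
        h0 ht).div_const 6)]
    refine integral_congr fun s hs => ?_
    rw [uIcc_of_le ht.1] at hs
    simp only [bridgeKernel_of_le hs.2, p]
    ring
  have hright : ∫ s in t..1, bridgeKernel s t * u s = ∫ s in t..1, p s * u s := by
    refine integral_congr fun s hs => ?_
    rw [uIcc_of_le ht.2] at hs
    simp only [bridgeKernel_of_ge hs.1, p]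
  have hpoly : ∫ s in (0 : ℝ)..1, p s * u s =
      t ^ 2 * bridgeCoeffSq u - t ^ 3 * bridgeCoeffCube u := by
    rw [bridgeCoeffSq, bridgeCoeffCube, ← intervalIntegral.integral_const_mul,
      ← intervalIntegral.integral_const_mul,
      ← integral_sub ((hu.intervalIntegrable_mul_of_mem_Icc (by fun_prop) h0 h1).const_mul _)
        ((hu.intervalIntegrable_mul_of_mem_Icc (by fun_prop) h0 h1).const_mul _)]
    congr 1 with s
    ring
  rw [← integral_add_adjacent_intervals (hu.intervalIntegrable_mul_of_mem_Icc hK h0 ht)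
      (hu.intervalIntegrable_mul_of_mem_Icc hK ht h1), hleft, hright, add_right_comm,
    integral_add_adjacent_intervals (hu.intervalIntegrable_mul_of_mem_Icc hp h0 ht)
      (hu.intervalIntegrable_mul_of_mem_Icc hp ht h1), hpoly, bridgeSolution]

theorem contDiffOn_bridgeSolution (hu : ContinuousOn u (Icc 0 1)) :
    ContDiffOn ℝ 4 (bridgeSolution u) (Icc 0 1) :=
  (ContDiff.contDiffOn (by fun_prop)).add
    ((cauchyRepeatedIntegral.contDiffOn one_pos hu 3).div_const (6 : ℝ))

theorem iteratedDerivWithin_four_bridgeSolution (hu : ContinuousOn u (Icc 0 1))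
    (ht : t ∈ Icc (0 : ℝ) 1) : iteratedDerivWithin 4 (bridgeSolution u) (Icc 0 1) t = u t := by
  have hU : UniqueDiffOn ℝ (Icc (0 : ℝ) 1) := uniqueDiffOn_Icc one_pos
  have hJ : iteratedDerivWithin 4 (cauchyRepeatedIntegral u 0 3) (Icc 0 1) t * 6⁻¹ = u t := by
    rw [cauchyRepeatedIntegral.iteratedDerivWithin_eqOn one_pos hu 3 ht]
    push_cast [Nat.factorial]
    ring
  unfold bridgeSolution
  rw [iteratedDerivWithin_fun_add (n := 4) ht hU (by fun_prop)
      ((cauchyRepeatedIntegral.contDiffOn one_pos hu 3).div_const (6 : ℝ) t ht),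
    show (fun t : ℝ => t ^ 2 * bridgeCoeffSq u - t ^ 3 * bridgeCoeffCube u) =
      (· ^ 2 * bridgeCoeffSq u) - (· ^ 3 * bridgeCoeffCube u) from rfl,
    iteratedDerivWithin_sub ht hU (by fun_prop) (by fun_prop)]
  simp [div_eq_mul_inv, iteratedDerivWithin_pow ht hU, hJ]

theorem hasDerivWithinAt_bridgeSolution (hu : ContinuousOn u (Icc 0 1))
    (ht : t ∈ Icc (0 : ℝ) 1) :
    HasDerivWithinAt (bridgeSolution u)
      (2 * t * bridgeCoeffSq u - 3 * t ^ 2 * bridgeCoeffCube u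
        + cauchyRepeatedIntegral u 0 2 t / 2) (Icc 0 1) t := by
  refine ((((hasDerivAt_pow 2 t).mul_const _).sub
    ((hasDerivAt_pow 3 t).mul_const _)).hasDerivWithinAt.add
      ((cauchyRepeatedIntegral.hasDerivWithinAt_succ 2 hu ht).div_const 6)).congr_deriv ?_
  push_cast
  ring

theorem bridgeSolution_zero : bridgeSolution u 0 = 0 := by
  simp [bridgeSolution, cauchyRepeatedIntegral]

theorem bridgeSolution_one (hu : ContinuousOn u (Icc 0 1)) : bridgeSolution u 1 = 0 := by
  rw [← integral_bridgeKernel_mul hu (right_mem_Icc.2 zero_le_one)]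
  calc _ = ∫ s in (0 : ℝ)..1, (0 : ℝ) := integral_congr fun s hs => by
        rw [uIcc_of_le zero_le_one] at hs
        rw [bridgeKernel_right_one hs.2, zero_mul]
    _ = 0 := integral_zero

theorem derivWithin_bridgeSolution_zero (hu : ContinuousOn u (Icc 0 1)) :
    derivWithin (bridgeSolution u) (Icc 0 1) 0 = 0 := by
  have h0 : (0 : ℝ) ∈ Icc (0 : ℝ) 1 := left_mem_Icc.2 zero_le_one
  rw [(hasDerivWithinAt_bridgeSolution hu h0).derivWithin (uniqueDiffOn_Icc one_pos 0 h0)]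
  simp [cauchyRepeatedIntegral]

/-- The integrand collapses to `((1 - s)² / 2 + 2 α(s) - 3 β(s)) u(s)`, whose first factor is the
`t`-derivative of the kernel at `t = 1` and vanishes identically. -/
theorem derivWithin_bridgeSolution_one (hu : ContinuousOn u (Icc 0 1)) :
    derivWithin (bridgeSolution u) (Icc 0 1) 1 = 0 := by
  have h0 : (0 : ℝ) ∈ Icc (0 : ℝ) 1 := left_mem_Icc.2 zero_le_one
  have h1 : (1 : ℝ) ∈ Icc (0 : ℝ) 1 := right_mem_Icc.2 zero_le_one
  have hI : ∀ f : ℝ → ℝ, Continuous f → IntervalIntegrable (fun s => f s * u s) volume 0 1 :=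
    fun f hf => hu.intervalIntegrable_mul_of_mem_Icc hf h0 h1
  rw [(hasDerivWithinAt_bridgeSolution hu h1).derivWithin (uniqueDiffOn_Icc one_pos 1 h1),
    bridgeCoeffSq, bridgeCoeffCube, cauchyRepeatedIntegral,
    ← intervalIntegral.integral_const_mul, ← intervalIntegral.integral_const_mul,
    ← intervalIntegral.integral_div,
    ← integral_sub ((hI _ (by fun_prop)).const_mul _) ((hI _ (by fun_prop)).const_mul _),
    ← integral_add (((hI _ (by fun_prop)).const_mul _).sub ((hI _ (by fun_prop)).const_mul _))
      ((hI (fun s => (1 - s) ^ 2) (by fun_prop)).div_const _)]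
  calc _ = ∫ s in (0 : ℝ)..1, (0 : ℝ) := by congr 1 with s; ring
    _ = 0 := integral_zero

end bridgeSolution

theorem stmt13 (u : ℝ → ℝ) (hu : ContinuousOn u (Set.Icc 0 1))
    (c : ℝ → ℝ → ℝ)
    (hc : ∀ s t : ℝ, c s t =
      1/6 * (min s t)^2 * (1 - max s t)^2 * (3 * max s t - min s t - 2*s*t))
    (v : ℝ → ℝ) (hv : ∀ t : ℝ, v t = ∫ s in (0:ℝ)..1, c s t * u s) :
    ContDiffOn ℝ 4 v (Set.Icc 0 1) ∧
    (∀ t ∈ Set.Icc (0:ℝ) 1, iteratedDerivWithin 4 v (Set.Icc 0 1) t = u t) ∧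
    v 0 = 0 ∧ iteratedDerivWithin 1 v (Set.Icc 0 1) 0 = 0 ∧
    v 1 = 0 ∧ iteratedDerivWithin 1 v (Set.Icc 0 1) 1 = 0 := by
  obtain rfl : c = bridgeKernel := funext₂ hc
  have hv : EqOn v (bridgeSolution u) (Icc 0 1) :=
    fun t ht => (hv t).trans (integral_bridgeKernel_mul hu ht)
  have h0 : (0 : ℝ) ∈ Icc (0 : ℝ) 1 := left_mem_Icc.2 zero_le_one
  have h1 : (1 : ℝ) ∈ Icc (0 : ℝ) 1 := right_mem_Icc.2 zero_le_one
  refine ⟨(contDiffOn_bridgeSolution hu).congr hv, fun t ht => ?_, ?_, ?_, ?_, ?_⟩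
  · rw [iteratedDerivWithin_congr hv ht, iteratedDerivWithin_four_bridgeSolution hu ht]
  · rw [hv h0, bridgeSolution_zero]
  · rw [iteratedDerivWithin_congr hv h0, iteratedDerivWithin_one,
      derivWithin_bridgeSolution_zero hu]
  · rw [hv h1, bridgeSolution_one hu]
  · rw [iteratedDerivWithin_congr hv h1, iteratedDerivWithin_one,
      derivWithin_bridgeSolution_one hu]
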